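/- Let R be a resampling table and K a positive integer. If there exists a collectible witness DAG G compatible with R with |G| ≥ K nodes, then there exists a collectible witness DAG G' compatible with R with K ≤ |G'| ≤ 2K nodes. -/

import Mathlib

open scoped Classical

namespace LLL

/-- Two bad events are dependent iff their variable sets intersect. -/
def Dep {n : ℕ} {E : Type} (S : E → Finset (Fin n)) (b b' : E) : Prop :=
  (S b ∩ S b').Nonempty

/-- A finite directed graph with nodes labeled by bad events. -/
structure LGraph (E : Type) where
  V : Type
  fin : Fintype V
  label : V → E
  edge : V → V → Prop

attribute [instance] LGraph.fin

namespace LGraph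

variable {n : ℕ} {E : Type}

/-- A labeled digraph is a witness DAG: it is acyclic, any two nodes with
dependent labels are joined by an edge (in one direction), and nodes with
non-dependent labels have no edge. -/
def IsWDag (S : E → Finset (Fin n)) (G : LGraph E) : Prop :=
  (∀ v, ¬ Relation.TransGen G.edge v v) ∧
  (∀ v w, G.edge v w → Dep S (G.label v) (G.label w)) ∧
  (∀ v w : G.V, v ≠ w → Dep S (G.label v) (G.label w) → G.edge v w ∨ G.edge w v)

/-- A node is a sink if it has no outgoing edge. -/
def IsSink (G : LGraph E) (v : G.V) : Prop := ∀ w, ¬ G.edge v w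

/-- Induced subgraph on a set of vertices. -/
noncomputable def induce (G : LGraph E) (s : Set G.V) : LGraph E where
  V := s
  fin := (Set.toFinite s).fintype
  label := fun v => G.label v.1
  edge := fun v w => G.edge v.1 w.1

/-- The set of vertices having a directed path to at least one vertex of `s`. -/
def ReachSet (G : LGraph E) (s : Set G.V) : Set G.V :=
  {u | ∃ v ∈ s, Relation.ReflTransGen G.edge u v}

/-- Isomorphism of labeled digraphs. -/
def LIso (G H : LGraph E) : Prop :=
  ∃ e : G.V ≃ H.V, (∀ v, H.label (e v) = G.label v) ∧
    ∀ v w, H.edge (e v) (e w) ↔ G.edge v w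

/-- `G` is a prefix of `H`: `G` is (isomorphic to) the subgraph of `H` induced
on all vertices having a path to a given set of vertices. -/
def IsPrefix (G H : LGraph E) : Prop :=
  ∃ s : Set H.V, LIso G (H.induce (H.ReachSet s))

/-- The position of node v among the nodes with the same label (the number of
same-labeled nodes strictly preceding it). -/
noncomputable def pos (G : LGraph E) (v : G.V) : ℕ :=
  (Finset.univ.filter fun u => G.label u = G.label v ∧ Relation.TransGen G.edge u v).card

/-- The node v has extended label bk = (B, k). -/
def HasExt (G : LGraph E) (v : G.V) (bk : E × ℕ) : Prop :=
  G.label v = bk.1 ∧ G.pos v = bk.2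

/-- The extended label bk = (B, k) occurs in G. -/
def Occurs (G : LGraph E) (bk : E × ℕ) : Prop := ∃ v, G.HasExt v bk

/-- The number of nodes strictly preceding `v` whose label involves variable `i`. -/
noncomputable def vcount (S : E → Finset (Fin n)) (G : LGraph E) (i : Fin n) (v : G.V) : ℕ :=
  (Finset.univ.filter fun u => i ∈ S (G.label u) ∧ Relation.TransGen G.edge u v).card

/-- Position k of the path G[i] of variable i is occupied by a node labeled b. -/
def VOccurs (S : E → Finset (Fin n)) (G : LGraph E) (i : Fin n) (k : ℕ) (b : E) : Prop :=
  ∃ v, i ∈ S (G.label v) ∧ vcount S G i v = k ∧ G.label v = b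

/-- G[i] is an initial segment of G'[i] (as labeled ordered graphs). -/
def InitSeg (S : E → Finset (Fin n)) (G G' : LGraph E) (i : Fin n) : Prop :=
  ∀ k b, VOccurs S G i k b → VOccurs S G' i k b

/-- Witness DAGs G, G' are consistent: for each variable i, either G[i] is an
initial segment of G'[i] or vice versa. -/
def Consistent (S : E → Finset (Fin n)) (G G' : LGraph E) : Prop :=
  ∀ i : Fin n, InitSeg S G G' i ∨ InitSeg S G' G i

/-- The merge G ∨ G' of two witness DAGs: one node for each extended label
occurring in G or G', with an edge between two extended labels iff G or G' has
an edge between nodes with those extended labels. -/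
noncomputable def merge (G G' : LGraph E) : LGraph E where
  V := {bk : E × ℕ // G.Occurs bk ∨ G'.Occurs bk}
  fin := by
    have hsub : {bk : E × ℕ | G.Occurs bk ∨ G'.Occurs bk} ⊆
        (Set.range fun v : G.V => (G.label v, G.pos v)) ∪
        (Set.range fun v : G'.V => (G'.label v, G'.pos v)) := by
      rintro bk (⟨v, hv1, hv2⟩ | ⟨v, hv1, hv2⟩)
      · exact Or.inl ⟨v, by simp [hv1, hv2]⟩
      · exact Or.inr ⟨v, by simp [hv1, hv2]⟩
    exact (((Set.finite_range _).union (Set.finite_range _)).subset hsub).fintype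
  label := fun bk => bk.1.1
  edge := fun a b =>
    (∃ v w, G.HasExt v a.1 ∧ G.HasExt w b.1 ∧ G.edge v w) ∨
    (∃ v w, G'.HasExt v a.1 ∧ G'.HasExt w b.1 ∧ G'.edge v w)

/-- A witness DAG G is compatible with a resampling table R: for every node v,
the label of v is true on the configuration read off from R. -/
def Compat {Vl : Type} (S : E → Finset (Fin n)) (Ev : E → (Fin n → Vl) → Prop)
    (G : LGraph E) (R : Fin n → ℕ → Vl) : Prop :=
  ∀ v : G.V, Ev (G.label v) (fun i => R i (vcount S G i v))

/-- A witness DAG is collectible to b if b is dependent with the labels of all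
its sink nodes; it is collectible if it is collectible to some bad event. -/
def Collectible (S : E → Finset (Fin n)) (G : LGraph E) : Prop :=
  ∃ b : E, ∀ v, G.IsSink v → Dep S b (G.label v)

end LGraph

/-!
Write `G(T)` for the set of nodes of `G` having a path to `T`. The subgraph induced on
`G(T)` is again a witness DAG compatible with `R`, since no node of `G` outside `G(T)`
precedes a node inside it, and its sinks lie in `T`; so it is collectible as soon as the
labels of `T` all depend on one event `b`. If moreover each `G(t)`, `t ∈ T`, has at most
`K` nodes, then adding the elements of `T` one at a time raises `|G(T)|` by at most `K`
per step, so once `|G(T)| ≥ K` some subset `T'` has `K ≤ |G(T')| ≤ 2K`. A suitable `T`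
consists of the in-neighbours of a minimal node `v` with `|G(v)| > K` (with `b` the label
of `v`), or, when there is no such node, of the sinks of `G`.
-/

theorem Dep.symm {n : ℕ} {E : Type} {S : E → Finset (Fin n)} {b b' : E} (h : Dep S b b') :
    Dep S b' b := by
  rwa [Dep, Finset.inter_comm]

theorem exists_subset_le_and_le_two_mul {α : Type*} [DecidableEq α]
    (f : Finset α → ℕ) {K : ℕ} {T : Finset α} (hf₀ : f ∅ ≤ K)
    (hf : ∀ a ∈ T, ∀ s, f (insert a s) ≤ f s + K) (hT : K ≤ f T) :
    ∃ T' ⊆ T, K ≤ f T' ∧ f T' ≤ 2 * K := by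
  induction T using Finset.induction_on with
  | empty => exact ⟨∅, subset_rfl, hT, by omega⟩
  | insert a s _ ih =>
    by_cases hs : K ≤ f s
    · obtain ⟨T', hT's, hT'⟩ := ih (fun b hb => hf b (Finset.mem_insert_of_mem hb)) hs
      exact ⟨T', hT's.trans (Finset.subset_insert a s), hT'⟩
    · have := hf a (Finset.mem_insert_self a s) s
      exact ⟨insert a s, subset_rfl, hT, by omega⟩

namespace LGraph

open Relation

variable {n : ℕ} {E : Type} {S : E → Finset (Fin n)} {G : LGraph E}

def IsDownClosed (G : LGraph E) (U : Set G.V) : Prop :=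
  ∀ a b, G.edge a b → b ∈ U → a ∈ U

theorem IsDownClosed.mem_of_transGen {U : Set G.V} (hU : G.IsDownClosed U) {a b : G.V}
    (h : TransGen G.edge a b) (hb : b ∈ U) : a ∈ U := by
  induction h with
  | single e => exact hU _ _ e hb
  | tail _ e ih => exact ih (hU _ _ e hb)

theorem transGen_val_of_transGen_induce {U : Set G.V} {a b : (G.induce U).V}
    (h : TransGen (G.induce U).edge a b) : TransGen G.edge a.1 b.1 :=
  TransGen.lift Subtype.val (fun _ _ e => e) _ _ h

theorem transGen_induce_iff {U : Set G.V} (hU : G.IsDownClosed U) {a b : (G.induce U).V} :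
    TransGen (G.induce U).edge a b ↔ TransGen G.edge a.1 b.1 := by
  refine ⟨transGen_val_of_transGen_induce, fun h => ?_⟩
  obtain ⟨a, ha⟩ := a
  obtain ⟨b, hb⟩ := b
  dsimp only at h
  induction h with
  | single e => exact TransGen.single e
  | tail _ e ih => exact (ih (hU _ _ e hb)).tail e

theorem vcount_induce {U : Set G.V} (hU : G.IsDownClosed U) (i : Fin n)
    (v : (G.induce U).V) : vcount S (G.induce U) i v = vcount S G i v.1 := by
  refine Finset.card_bij (fun w _ => w.1) ?_ (fun _ _ _ _ => Subtype.ext) ?_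
  · intro w hw
    obtain ⟨-, hi, hwv⟩ := Finset.mem_filter.1 hw
    exact Finset.mem_filter.2 ⟨Finset.mem_univ _, hi, transGen_val_of_transGen_induce hwv⟩
  · intro w hw
    obtain ⟨-, hi, hwv⟩ := Finset.mem_filter.1 hw
    refine ⟨⟨w, hU.mem_of_transGen hwv v.2⟩, ?_, rfl⟩
    exact Finset.mem_filter.2 ⟨Finset.mem_univ _, hi, (transGen_induce_iff hU).2 hwv⟩

theorem IsWDag.induce (hG : G.IsWDag S) (U : Set G.V) : (G.induce U).IsWDag S :=
  ⟨fun v h => hG.1 v.1 (transGen_val_of_transGen_induce h),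
   fun v w e => hG.2.1 v.1 w.1 e,
   fun v w hne hd => hG.2.2 v.1 w.1 (fun h => hne (Subtype.ext h)) hd⟩

theorem Compat.induce {Vl : Type} {Ev : E → (Fin n → Vl) → Prop} {R : Fin n → ℕ → Vl}
    (hc : Compat S Ev G R) {U : Set G.V} (hU : G.IsDownClosed U) :
    Compat S Ev (G.induce U) R := by
  intro v
  simp only [vcount_induce hU]
  exact hc v.1

theorem card_induce (U : Set G.V) : Fintype.card (G.induce U).V = U.ncard :=
  Nat.card_eq_fintype_card.symm.trans (Nat.card_coe_set_eq U)

theorem isDownClosed_reachSet (s : Set G.V) : G.IsDownClosed (G.ReachSet s) :=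
  fun _ _ e ⟨t, ht, hp⟩ => ⟨t, ht, ReflTransGen.head e hp⟩

theorem reachSet_empty : G.ReachSet ∅ = ∅ := by
  simp [ReachSet]

theorem reachSet_union (s s' : Set G.V) :
    G.ReachSet (s ∪ s') = G.ReachSet s ∪ G.ReachSet s' := by
  ext x
  simp only [ReachSet, Set.mem_union, Set.mem_ofPred_eq, or_and_right, exists_or]

theorem reachSet_singleton_subset (v : G.V) :
    G.ReachSet {v} ⊆ insert v (G.ReachSet {t | G.edge t v}) := by
  rintro x ⟨_, rfl, hp⟩
  rcases hp.cases_tail with rfl | ⟨t, hp, e⟩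
  · exact Set.mem_insert _ _
  · exact Or.inr ⟨t, e, hp⟩

theorem ncard_reachSet_insert_le (a : G.V) (s : Finset G.V) :
    (G.ReachSet ↑(insert a s)).ncard ≤ (G.ReachSet ↑s).ncard + (G.ReachSet {a}).ncard := by
  rw [Finset.coe_insert, Set.insert_eq, reachSet_union, add_comm]
  exact Set.ncard_union_le _ _

theorem mem_of_isSink_induce_reachSet {T : Set G.V} {v : (G.induce (G.ReachSet T)).V}
    (hv : (G.induce (G.ReachSet T)).IsSink v) : v.1 ∈ T := by
  obtain ⟨t, ht, hp⟩ := v.2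
  rcases hp.cases_head with h | ⟨c, e, hp'⟩
  · rwa [h]
  · exact absurd e (hv ⟨c, ⟨t, ht, hp'⟩⟩)

theorem collectible_induce_reachSet {b : E} {T : Set G.V}
    (hT : ∀ t ∈ T, Dep S b (G.label t)) : Collectible S (G.induce (G.ReachSet T)) :=
  ⟨b, fun _ hv => hT _ (mem_of_isSink_induce_reachSet hv)⟩

theorem IsWDag.wellFounded (hG : G.IsWDag S) : WellFounded (TransGen G.edge) :=
  have : Std.Irrefl (TransGen G.edge) := ⟨hG.1⟩
  Finite.wellFounded_of_trans_of_irrefl _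

theorem IsWDag.exists_isSink (hG : G.IsWDag S) (v : G.V) :
    ∃ s, G.IsSink s ∧ ReflTransGen G.edge v s := by
  have : Std.Irrefl (Function.swap (TransGen G.edge)) := ⟨hG.1⟩
  obtain ⟨s, hvs, hmin⟩ :=
    (Finite.wellFounded_of_trans_of_irrefl (Function.swap (TransGen G.edge))).has_min
    {s | ReflTransGen G.edge v s} ⟨v, ReflTransGen.refl⟩
  exact ⟨s, fun w e => hmin w (ReflTransGen.tail hvs e) (TransGen.single e), hvs⟩

theorem IsWDag.exists_dep_finset_reachSet (hG : G.IsWDag S) (hcol : Collectible S G)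
    {K : ℕ} (hsz : K ≤ Fintype.card G.V) :
    ∃ (b : E) (T : Finset G.V), (∀ t ∈ T, Dep S b (G.label t)) ∧
      (∀ t ∈ T, (G.ReachSet {t}).ncard ≤ K) ∧ K ≤ (G.ReachSet T).ncard := by
  by_cases hlarge : ∃ v, K < (G.ReachSet {v}).ncard
  · obtain ⟨v, hv, hmin⟩ := hG.wellFounded.has_min {v | K < (G.ReachSet {v}).ncard} hlarge
    refine ⟨G.label v, Finset.univ.filter (G.edge · v), fun t ht => ?_, fun t ht => ?_, ?_⟩
    · exact (hG.2.1 t v (Finset.mem_filter.1 ht).2).symm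
    · exact not_lt.1 fun h => hmin t h (TransGen.single (Finset.mem_filter.1 ht).2)
    · have := (Set.ncard_le_ncard (reachSet_singleton_subset v)).trans (Set.ncard_insert_le _ _)
      rw [Finset.coe_filter_univ]
      exact Nat.le_of_lt_succ (hv.trans_le this)
  · obtain ⟨b, hb⟩ := hcol
    refine ⟨b, Finset.univ.filter G.IsSink, fun t ht => hb t (Finset.mem_filter.1 ht).2,
      fun t _ => not_lt.1 fun h => hlarge ⟨t, h⟩, ?_⟩
    have hall : G.ReachSet ↑(Finset.univ.filter G.IsSink) = Set.univ :=
      Set.eq_univ_of_forall fun u =>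
        let ⟨s, hs, hus⟩ := hG.exists_isSink u
        ⟨s, by simpa using hs, hus⟩
    rwa [hall, Set.ncard_univ, Nat.card_eq_fintype_card]

end LGraph

theorem stmt12_general {n : ℕ} {E Vl : Type} (S : E → Finset (Fin n))
    (Ev : E → (Fin n → Vl) → Prop)
    (R : Fin n → ℕ → Vl) (K : ℕ)
    (G : LGraph E) (hG : G.IsWDag S) (hcol : LGraph.Collectible S G)
    (hcomp : LGraph.Compat S Ev G R) (hsz : K ≤ Fintype.card G.V) :
    ∃ G' : LGraph E, G'.IsWDag S ∧ LGraph.Collectible S G' ∧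
      LGraph.Compat S Ev G' R ∧
      K ≤ Fintype.card G'.V ∧ Fintype.card G'.V ≤ 2 * K := by
  obtain ⟨b, T, hdep, hsmall, hbig⟩ := hG.exists_dep_finset_reachSet hcol hsz
  obtain ⟨T', hT'T, hK, h2K⟩ := exists_subset_le_and_le_two_mul
    (fun s : Finset G.V => (G.ReachSet s).ncard) (by simp [LGraph.reachSet_empty])
    (fun a ha s => (LGraph.ncard_reachSet_insert_le a s).trans (by gcongr; exact hsmall a ha))
    hbig
  refine ⟨G.induce (G.ReachSet T'), hG.induce _,
    LGraph.collectible_induce_reachSet fun t ht => hdep t (hT'T ht),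
    hcomp.induce (LGraph.isDownClosed_reachSet _), ?_, ?_⟩ <;> rwa [LGraph.card_induce]

/-- If there is a collectible witness DAG compatible with R with
at least K nodes, then there is a collectible witness DAG compatible with R
with between K and 2K nodes. -/
theorem stmt12 {n : ℕ} {E Vl : Type} (S : E → Finset (Fin n))
    (Ev : E → (Fin n → Vl) → Prop)
    (hEvdep : ∀ b (x y : Fin n → Vl), (∀ i ∈ S b, x i = y i) → (Ev b x ↔ Ev b y))
    (R : Fin n → ℕ → Vl) (K : ℕ) (hK : 0 < K)
    (G : LGraph E) (hG : G.IsWDag S) (hcol : LGraph.Collectible S G)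
    (hcomp : LGraph.Compat S Ev G R) (hsz : K ≤ Fintype.card G.V) :
    ∃ G' : LGraph E, G'.IsWDag S ∧ LGraph.Collectible S G' ∧
      LGraph.Compat S Ev G' R ∧
      K ≤ Fintype.card G'.V ∧ Fintype.card G'.V ≤ 2 * K :=
  stmt12_general S Ev R K G hG hcol hcomp hsz

end LLL
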